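/- arXiv:2403.01392 — 2 statements merged into one kernel-verified Lean document; each statement's English description precedes it below -/
import Mathlib

section
/- Let 0 ≤ η₁, η₂ ≤ 1 with η₁² + η₂² = 1, and let Λ be a joint map for the pair of noisy identity qubit channels (Λ_{η₁}, Λ_{η₂}). Then for all unit vectors n, m ∈ ℝ³, Λ( (n·σ) ⊗ (m·σ) ) = (n·m)·Λ( (n·σ) ⊗ (n·σ) ). -/
open Matrix Kronecker
open scoped ComplexOrder

noncomputable section

/-- 2×2 complex matrices. -/
abbrev M2 : Type := Matrix (Fin 2) (Fin 2) ℂ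

/-- 4×4 complex matrices, identified with `M2 ⊗ M2` via the Kronecker product. -/
abbrev M4 : Type := Matrix (Fin 2 × Fin 2) (Fin 2 × Fin 2) ℂ

/-- The noisy identity qubit channel `Λ_η(A) = η A + ((1-η)/2) tr(A) I` (Heisenberg picture). -/
def noisyId (η : ℝ) (A : M2) : M2 :=
  (η : ℂ) • A + (((1 - η) / 2 : ℝ) : ℂ) • (A.trace • (1 : M2))

/-- `Λ` is a joint map for the pair `(Λ_{η₁}, Λ_{η₂})` of noisy identity channels:
it sends Kronecker products of positive semidefinite matrices to positive semidefinite
matrices and has the two channels as its margins. -/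
def IsJointMap (η₁ η₂ : ℝ) (Λ : M4 →ₗ[ℂ] M2) : Prop :=
  (∀ A B : M2, A.PosSemidef → B.PosSemidef → (Λ (A ⊗ₖ B)).PosSemidef) ∧
  (∀ X : M2, Λ (X ⊗ₖ (1 : M2)) = noisyId η₁ X) ∧
  (∀ Y : M2, Λ ((1 : M2) ⊗ₖ Y) = noisyId η₂ Y)

/-- Pauli matrices. -/
def pauli1 : M2 := !![0, 1; 1, 0]
def pauli2 : M2 := !![0, -Complex.I; Complex.I, 0]
def pauli3 : M2 := !![1, 0; 0, -1]

/-- `n · σ = n₁σ₁ + n₂σ₂ + n₃σ₃` for a real vector `n ∈ ℝ³`. -/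
def dotSigma (n : Fin 3 → ℝ) : M2 :=
  (n 0 : ℂ) • pauli1 + (n 1 : ℂ) • pauli2 + (n 2 : ℂ) • pauli3

/-! ### Auxiliary lemmas -/

lemma psd_det_nonneg {P : M2} (h : P.PosSemidef) : 0 ≤ P.det := by
  rw [h.isHermitian.det_eq_prod_eigenvalues]
  apply Finset.prod_nonneg
  intro i _
  simpa using Complex.real_le_real.mpr (h.eigenvalues_nonneg i)

lemma psd_diag_nonneg {P : M2} (h : P.PosSemidef) (i : Fin 2) : 0 ≤ P i i := by
  have := (posSemidef_iff_dotProduct_mulVec.mp h).2 (Pi.single i 1)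
  fin_cases i <;>
  simpa [dotProduct, Matrix.mulVec, Fin.sum_univ_two, Pi.single_apply] using this

lemma dotSigma_mat (n : Fin 3 → ℝ) :
    dotSigma n = !![(n 2 : ℂ), (n 0 : ℂ) - (n 1 : ℂ)*Complex.I;
                   (n 0 : ℂ) + (n 1 : ℂ)*Complex.I, -(n 2 : ℂ)] := by
  ext i j
  fin_cases i <;> fin_cases j <;>
    simp [dotSigma, pauli1, pauli2, pauli3] <;> ring

lemma dotSigma_herm (n : Fin 3 → ℝ) : (dotSigma n)ᴴ = dotSigma n := by
  rw [dotSigma_mat]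
  ext i j
  fin_cases i <;> fin_cases j <;>
    simp [Matrix.conjTranspose_apply, Complex.ext_iff]

lemma dotSigma_trace (n : Fin 3 → ℝ) : (dotSigma n).trace = 0 := by
  rw [dotSigma_mat]; simp [Matrix.trace_fin_two]

lemma dotSigma_sq {n : Fin 3 → ℝ} (hn : (∑ i, n i ^ 2) = 1) :
    dotSigma n * dotSigma n = 1 := by
  have hnC : (n 0 : ℂ)^2 + (n 1 : ℂ)^2 + (n 2 : ℂ)^2 = 1 := by
    rw [Fin.sum_univ_three] at hn; exact_mod_cast hn
  rw [dotSigma_mat]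
  ext i j
  fin_cases i <;> fin_cases j <;>
    simp [Matrix.mul_apply, Fin.sum_univ_two, Matrix.one_apply] <;>
    first
      | linear_combination hnC - (n 1 : ℂ)^2 * Complex.I_sq
      | ring

lemma dotSigma_comb (p q : ℝ) (n k : Fin 3 → ℝ) :
    dotSigma (fun i => p * n i + q * k i) = (p:ℂ) • dotSigma n + (q:ℂ) • dotSigma k := by
  simp only [dotSigma]
  push_cast
  module

lemma dotSigma_smul (c : ℝ) (n : Fin 3 → ℝ) :
    dotSigma (fun i => c * n i) = (c:ℂ) • dotSigma n := by
  simp only [dotSigma]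
  push_cast
  module

lemma psd_one_add {n : Fin 3 → ℝ} (hn : (∑ i, n i ^ 2) = 1) :
    (1 + dotSigma n).PosSemidef := by
  set N := dotSigma n with hN
  have h2 : (1 + N) * (1 + N) = (2:ℂ) • (1 + N) := by
    simp only [add_mul, mul_add, one_mul, mul_one, hN, dotSigma_sq hn, two_smul]
    abel
  set c : ℂ := ((Real.sqrt 2 : ℝ) : ℂ)⁻¹ with hc
  have key : 1 + N = (c • (1 + N))ᴴ * (c • (1 + N)) := by
    rw [conjTranspose_smul, conjTranspose_add, conjTranspose_one, hN, dotSigma_herm, ← hN]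
    rw [smul_mul_smul_comm, h2, smul_smul]
    have hsq : ((Real.sqrt 2 : ℝ) : ℂ) * ((Real.sqrt 2 : ℝ) : ℂ) = 2 := by
      rw [← Complex.ofReal_mul, Real.mul_self_sqrt (by norm_num : (0:ℝ) ≤ 2)]
      norm_num
    have : star c * c * 2 = 1 := by
      rw [hc]
      rw [star_inv₀, Complex.star_def, Complex.conj_ofReal]
      field_simp
      linear_combination -hsq
    rw [this, one_smul]
  rw [key]
  exact posSemidef_conjTranspose_mul_self _

/-- The key lemma: for orthogonal unit vectors the joint map vanishes on the
corresponding Kronecker product of Pauli combinations. -/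
lemma endgame_zero {a d br bi : ℝ}
    (E1 : 0 ≤ 2*((1+a)*(1+d) - 1 - (br^2+bi^2)))
    (E2 : 0 ≤ 2*((1-a)*(1-d) - 1 - (br^2+bi^2)))
    (T1 : 0 ≤ 2 + a + d) (T2 : 0 ≤ 2 - a - d) :
    a = 0 ∧ d = 0 ∧ br = 0 ∧ bi = 0 := by
  have F1 : 0 ≤ ((1+a)*(1+d) - 1 - (br^2+bi^2)) * (2-a-d) :=
    mul_nonneg (by linarith) (by linarith)
  have F2 : 0 ≤ ((1-a)*(1-d) - 1 - (br^2+bi^2)) * (2+a+d) :=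
    mul_nonneg (by linarith) (by linarith)
  have key : a^2 + d^2 + br^2 + bi^2 ≤ 0 := by nlinarith [F1, F2, sq_nonneg br, sq_nonneg bi]
  refine ⟨?_, ?_, ?_, ?_⟩
  · have h : a^2 = 0 := le_antisymm
      (by nlinarith [sq_nonneg d, sq_nonneg br, sq_nonneg bi]) (sq_nonneg a)
    exact pow_eq_zero_iff two_ne_zero |>.mp h
  · have h : d^2 = 0 := le_antisymm
      (by nlinarith [sq_nonneg a, sq_nonneg br, sq_nonneg bi]) (sq_nonneg d)
    exact pow_eq_zero_iff two_ne_zero |>.mp h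
  · have h : br^2 = 0 := le_antisymm
      (by nlinarith [sq_nonneg a, sq_nonneg d, sq_nonneg bi]) (sq_nonneg br)
    exact pow_eq_zero_iff two_ne_zero |>.mp h
  · have h : bi^2 = 0 := le_antisymm
      (by nlinarith [sq_nonneg a, sq_nonneg d, sq_nonneg br]) (sq_nonneg bi)
    exact pow_eq_zero_iff two_ne_zero |>.mp h

set_option maxHeartbeats 2000000 in
lemma joint_map_orth_zero (η₁ η₂ : ℝ) (hcirc : η₁ ^ 2 + η₂ ^ 2 = 1)
    (Λ : M4 →ₗ[ℂ] M2) (hΛ : IsJointMap η₁ η₂ Λ)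
    (n k : Fin 3 → ℝ) (hn : (∑ i, n i ^ 2) = 1) (hk : (∑ i, k i ^ 2) = 1)
    (ho : (∑ i, n i * k i) = 0) :
    Λ (dotSigma n ⊗ₖ dotSigma k) = 0 := by
  set N := dotSigma n with hNdef
  set K := dotSigma k with hKdef
  set G := Λ (N ⊗ₖ K) with hGdef
  -- margins
  have hone : Λ ((1:M2) ⊗ₖ (1:M2)) = 1 := by
    rw [hΛ.2.1 1]
    simp only [noisyId, Matrix.trace_one, Fintype.card_fin, Nat.cast_ofNat]
    push_cast
    module
  have hmargN : Λ (N ⊗ₖ (1:M2)) = (η₁:ℂ) • N := by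
    rw [hNdef, hΛ.2.1]
    simp [noisyId, dotSigma_trace]
  have hmargK : Λ ((1:M2) ⊗ₖ K) = (η₂:ℂ) • K := by
    rw [hKdef, hΛ.2.2]
    simp [noisyId, dotSigma_trace]
  have hsc : ∀ (c : ℝ) (p : Fin 3 → ℝ), (∑ i, p i ^ 2) = 1 → c * c = 1 →
      (∑ i, (c * p i) ^ 2) = 1 := by
    intro c p hp hc
    have : (∑ i, (c * p i) ^ 2) = (c * c) * ∑ i, p i ^ 2 := by
      rw [Finset.mul_sum]
      exact Finset.sum_congr rfl fun i _ => by ring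
    rw [this, hp, hc, mul_one]
  -- the four positivity constraints, parametrized by signs
  have hNK : ∀ ε δ : ℝ, ε * ε = 1 → δ * δ = 1 →
      (1 + ((ε * η₁ : ℝ) : ℂ) • N + ((δ * η₂ : ℝ) : ℂ) • K + ((ε * δ : ℝ) : ℂ) • G).PosSemidef := by
    intro ε δ hε hδ
    have hps := hΛ.1 (1 + dotSigma (fun i => ε * n i)) (1 + dotSigma (fun i => δ * k i))
      (psd_one_add (hsc ε n hn hε)) (psd_one_add (hsc δ k hk hδ))
    have e : Λ ((1 + dotSigma (fun i => ε * n i)) ⊗ₖ (1 + dotSigma (fun i => δ * k i)))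
        = 1 + ((ε * η₁ : ℝ) : ℂ) • N + ((δ * η₂ : ℝ) : ℂ) • K + ((ε * δ : ℝ) : ℂ) • G := by
      simp only [dotSigma_smul, ← hNdef, ← hKdef, add_kronecker, kronecker_add,
        smul_kronecker, kronecker_smul, map_add, _root_.map_smul, hone, hmargN, hmargK, ← hGdef]
      push_cast
      module
    rw [e] at hps
    exact hps
  -- hermiticity of G
  have hGh : Gᴴ = G := by
    have h := (hNK 1 1 (by norm_num) (by norm_num)).isHermitian
    have h' := h.eq
    simp only [conjTranspose_add, conjTranspose_smul, conjTranspose_one,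
      hNdef, hKdef, dotSigma_herm, Complex.star_def, Complex.conj_ofReal] at h'
    have := h'
    -- cancel the Hermitian part
    have hcan : (((1:ℝ)*(1:ℝ) : ℝ) : ℂ) • Gᴴ = (((1:ℝ)*(1:ℝ) : ℝ) : ℂ) • G := by
      have e1 : (1:M2) + ((1*η₁ : ℝ):ℂ) • dotSigma n + ((1*η₂ : ℝ):ℂ) • dotSigma k
          + ((1*1 : ℝ):ℂ) • Gᴴ
          = (1:M2) + ((1*η₁ : ℝ):ℂ) • dotSigma n + ((1*η₂ : ℝ):ℂ) • dotSigma k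
          + ((1*1 : ℝ):ℂ) • G := by
        convert this using 2 <;> abel
      exact add_left_cancel e1
    simpa using hcan
  have hG10 : G 1 0 = (starRingEnd ℂ) (G 0 1) := by
    have := congrFun (congrFun hGh 1) 0
    simpa [Matrix.conjTranspose_apply] using this.symm
  have ha0 : (G 0 0).im = 0 := by
    have := congrFun (congrFun hGh 0) 0
    simp only [Matrix.conjTranspose_apply] at this
    have h2 := congrArg Complex.im this
    simp at h2
    linarith
  have hd0 : (G 1 1).im = 0 := by
    have := congrFun (congrFun hGh 1) 1
    simp only [Matrix.conjTranspose_apply] at this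
    have h2 := congrArg Complex.im this
    simp at h2
    linarith
  set a : ℝ := (G 0 0).re with hadef
  set d : ℝ := (G 1 1).re with hddef
  set br : ℝ := (G 0 1).re with hbrdef
  set bi : ℝ := (G 0 1).im with hbidef
  -- real determinant inequalities
  have hD : ∀ ε δ : ℝ, ε * ε = 1 → δ * δ = 1 →
      0 ≤ (1 + ε*η₁*n 2 + δ*η₂*k 2 + ε*δ*a) * (1 - ε*η₁*n 2 - δ*η₂*k 2 + ε*δ*d)
          - (ε*η₁*n 0 + δ*η₂*k 0 + ε*δ*br)^2 - (ε*η₁*n 1 + δ*η₂*k 1 - ε*δ*bi)^2 := by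
    intro ε δ hε hδ
    have h0 := psd_det_nonneg (hNK ε δ hε hδ)
    rw [Matrix.det_fin_two] at h0
    simp [hNdef, hKdef, dotSigma_mat, Matrix.one_apply, hG10] at h0
    rw [Complex.le_def] at h0
    have h1 := h0.1
    simp only [Complex.add_re, Complex.add_im, Complex.sub_re, Complex.sub_im,
      Complex.mul_re, Complex.mul_im, Complex.ofReal_re, Complex.ofReal_im,
      Complex.one_re, Complex.one_im, Complex.I_re, Complex.I_im, Complex.neg_re,
      Complex.neg_im, Complex.conj_re, Complex.conj_im, Complex.zero_re,
      ha0, hd0, mul_zero, zero_mul, mul_one, one_mul, sub_zero, zero_sub, add_zero,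
      zero_add, neg_neg, neg_zero, ← hadef, ← hddef, ← hbrdef, ← hbidef] at h1
    exact (sub_nonneg.mpr h1).trans (le_of_eq (by ring))
  -- real diagonal inequalities
  have hT : ∀ ε δ : ℝ, ε * ε = 1 → δ * δ = 1 →
      0 ≤ 1 + ε*η₁*n 2 + δ*η₂*k 2 + ε*δ*a ∧ 0 ≤ 1 - ε*η₁*n 2 - δ*η₂*k 2 + ε*δ*d := by
    intro ε δ hε hδ
    have h0 := psd_diag_nonneg (hNK ε δ hε hδ) 0
    have h1 := psd_diag_nonneg (hNK ε δ hε hδ) 1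
    simp [hNdef, hKdef, dotSigma_mat, Matrix.one_apply] at h0 h1
    rw [Complex.le_def] at h0 h1
    constructor
    · have := h0.1
      simp only [Complex.add_re, Complex.mul_re, Complex.ofReal_re, Complex.ofReal_im,
        Complex.one_re, Complex.zero_re, ha0, mul_zero, zero_mul, sub_zero,
        ← hadef] at this
      exact this.trans (le_of_eq (by ring))
    · have := h1.1
      simp only [Complex.add_re, Complex.neg_re, Complex.mul_re, Complex.ofReal_re,
        Complex.ofReal_im, Complex.one_re, Complex.zero_re, hd0, mul_zero, zero_mul,
        sub_zero, ← hddef] at this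
      exact this.trans (le_of_eq (by ring))
  -- instantiate the four sign choices
  have Dpp : 0 ≤ (1 + η₁*n 2 + η₂*k 2 + a) * (1 - η₁*n 2 - η₂*k 2 + d)
      - (η₁*n 0 + η₂*k 0 + br)^2 - (η₁*n 1 + η₂*k 1 - bi)^2 :=
    (hD 1 1 (by norm_num) (by norm_num)).trans (le_of_eq (by ring))
  have Dpm : 0 ≤ (1 + η₁*n 2 - η₂*k 2 - a) * (1 - η₁*n 2 + η₂*k 2 - d)
      - (η₁*n 0 - η₂*k 0 - br)^2 - (η₁*n 1 - η₂*k 1 + bi)^2 :=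
    (hD 1 (-1) (by norm_num) (by norm_num)).trans (le_of_eq (by ring))
  have Dmp : 0 ≤ (1 - η₁*n 2 + η₂*k 2 - a) * (1 + η₁*n 2 - η₂*k 2 - d)
      - (η₁*n 0 - η₂*k 0 + br)^2 - (η₁*n 1 - η₂*k 1 - bi)^2 :=
    (hD (-1) 1 (by norm_num) (by norm_num)).trans (le_of_eq (by ring))
  have Dmm : 0 ≤ (1 - η₁*n 2 - η₂*k 2 + a) * (1 + η₁*n 2 + η₂*k 2 + d)
      - (η₁*n 0 + η₂*k 0 - br)^2 - (η₁*n 1 + η₂*k 1 + bi)^2 :=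
    (hD (-1) (-1) (by norm_num) (by norm_num)).trans (le_of_eq (by ring))
  -- constraint equalities, premultiplied
  rw [Fin.sum_univ_three] at hn hk ho
  have q1 : η₁^2*(n 0^2) + η₁^2*(n 1^2) + η₁^2*(n 2^2) = η₁^2 := by
    linear_combination η₁^2 * hn
  have q2 : η₂^2*(k 0^2) + η₂^2*(k 1^2) + η₂^2*(k 2^2) = η₂^2 := by
    linear_combination η₂^2 * hk
  have q3 : η₁*η₂*(n 0*k 0) + η₁*η₂*(n 1*k 1) + η₁*η₂*(n 2*k 2) = 0 := by
    linear_combination η₁*η₂ * ho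
  have hE1sum : ((1 + η₁*n 2 + η₂*k 2 + a) * (1 - η₁*n 2 - η₂*k 2 + d)
      - (η₁*n 0 + η₂*k 0 + br)^2 - (η₁*n 1 + η₂*k 1 - bi)^2)
      + ((1 - η₁*n 2 - η₂*k 2 + a) * (1 + η₁*n 2 + η₂*k 2 + d)
      - (η₁*n 0 + η₂*k 0 - br)^2 - (η₁*n 1 + η₂*k 1 + bi)^2)
      = 2*((1+a)*(1+d) - 1 - (br^2+bi^2)) := by
    linear_combination (-2)*q1 + (-2)*q2 + (-4)*q3 + (-2)*hcirc
  have hE2sum : ((1 + η₁*n 2 - η₂*k 2 - a) * (1 - η₁*n 2 + η₂*k 2 - d)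
      - (η₁*n 0 - η₂*k 0 - br)^2 - (η₁*n 1 - η₂*k 1 + bi)^2)
      + ((1 - η₁*n 2 + η₂*k 2 - a) * (1 + η₁*n 2 - η₂*k 2 - d)
      - (η₁*n 0 - η₂*k 0 + br)^2 - (η₁*n 1 - η₂*k 1 - bi)^2)
      = 2*((1-a)*(1-d) - 1 - (br^2+bi^2)) := by
    linear_combination (-2)*q1 + (-2)*q2 + 4*q3 + (-2)*hcirc
  have E1 : 0 ≤ 2*((1+a)*(1+d) - 1 - (br^2+bi^2)) := hE1sum ▸ add_nonneg Dpp Dmm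
  have E2 : 0 ≤ 2*((1-a)*(1-d) - 1 - (br^2+bi^2)) := hE2sum ▸ add_nonneg Dpm Dmp
  have Tpp := hT 1 1 (by norm_num) (by norm_num)
  have Tpm := hT 1 (-1) (by norm_num) (by norm_num)
  have T1 : 0 ≤ 2 + a + d := (add_nonneg Tpp.1 Tpp.2).trans (le_of_eq (by ring))
  have T2 : 0 ≤ 2 - a - d := (add_nonneg Tpm.1 Tpm.2).trans (le_of_eq (by ring))
  obtain ⟨ha, hd, hbr, hbi⟩ := endgame_zero E1 E2 T1 T2
  -- conclude G = 0
  have hG01 : G 0 1 = 0 := by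
    apply Complex.ext <;> simp [← hbrdef, ← hbidef, hbr, hbi]
  show G = 0
  ext i j
  fin_cases i <;> fin_cases j
  · apply Complex.ext <;> simp [← hadef, ha, ha0]
  · simpa using hG01
  · show G 1 0 = (0 : M2) 1 0
    rw [hG10, hG01]
    simp
  · apply Complex.ext <;> simp [← hddef, hd, hd0]

/-- for `η₁² + η₂² = 1` and a joint map `Λ` of `(Λ_{η₁}, Λ_{η₂})`,
one has `Λ((n·σ) ⊗ (m·σ)) = (n·m) Λ((n·σ) ⊗ (n·σ))` for all unit vectors `n, m ∈ ℝ³`. -/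
theorem joint_map_dot_factorizes (η₁ η₂ : ℝ)
    (h₁ : 0 ≤ η₁) (h₁' : η₁ ≤ 1) (h₂ : 0 ≤ η₂) (h₂' : η₂ ≤ 1)
    (hcirc : η₁ ^ 2 + η₂ ^ 2 = 1)
    (Λ : M4 →ₗ[ℂ] M2) (hΛ : IsJointMap η₁ η₂ Λ)
    (n m : Fin 3 → ℝ) (hn : (∑ i, n i ^ 2) = 1) (hm : (∑ i, m i ^ 2) = 1) :
    Λ (dotSigma n ⊗ₖ dotSigma m) =
      ((∑ i, n i * m i : ℝ) : ℂ) • Λ (dotSigma n ⊗ₖ dotSigma n) := by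
  set c : ℝ := ∑ i, n i * m i with hc
  by_cases hw : (fun i => m i - c * n i) = 0
  · have hmeq : m = fun i => c * n i := by
      funext i
      have := congrFun hw i
      simp at this
      linarith
    rw [hmeq, dotSigma_smul, kronecker_smul]
    exact Λ.map_smul _ _
  · set k : Fin 3 → ℝ := fun i => (m i - c * n i) / Real.sqrt (1 - c^2) with hkdef
    have hsum : (∑ i, (m i - c * n i)^2) = 1 - c^2 := by
      rw [Fin.sum_univ_three] at hn hm ⊢
      rw [Fin.sum_univ_three] at hc
      linear_combination hm + c^2 * hn + 2*c*hc
    have hpos : 0 < 1 - c^2 := by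
      rcases lt_or_eq_of_le (by positivity : (0:ℝ) ≤ ∑ i, (m i - c * n i)^2) with h | h
      · rwa [hsum] at h
      · exfalso
        apply hw
        funext i
        have hz : (m i - c * n i)^2 = 0 := by
          have hle : (m i - c * n i)^2 ≤ ∑ j, (m j - c * n j)^2 :=
            Finset.single_le_sum (f := fun j => (m j - c * n j)^2)
              (fun j _ => sq_nonneg _) (Finset.mem_univ i)
          nlinarith [sq_nonneg (m i - c * n i), hle, h]
        have h2 := pow_eq_zero_iff (by norm_num : (2:ℕ) ≠ 0) |>.mp hz
        simpa using h2
    set s : ℝ := Real.sqrt (1 - c^2) with hs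
    have hspos : 0 < s := Real.sqrt_pos.mpr hpos
    have hs2 : s^2 = 1 - c^2 := Real.sq_sqrt (le_of_lt hpos)
    have hkunit : (∑ i, k i ^ 2) = 1 := by
      simp only [hkdef, div_pow]
      rw [← Finset.sum_div, hsum, hs2]
      exact div_self (ne_of_gt hpos)
    have hnum : (∑ i, n i * (m i - c * n i)) = 0 := by
      rw [Fin.sum_univ_three] at hn ⊢
      rw [Fin.sum_univ_three] at hc
      linear_combination (-c) * hn - hc
    have hkorth : (∑ i, n i * k i) = 0 := by
      simp only [hkdef, ← mul_div_assoc, ← Finset.sum_div, hnum, zero_div]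
    have hsne : s ≠ 0 := ne_of_gt hspos
    have hmdecomp : m = fun i => c * n i + s * k i := by
      funext i
      simp only [hkdef, ← hs]
      field_simp
      ring
    have hzero := joint_map_orth_zero η₁ η₂ hcirc Λ hΛ n k hn hkunit hkorth
    rw [hmdecomp, dotSigma_comb, kronecker_add, kronecker_smul, kronecker_smul,
      map_add, LinearMap.map_smul, LinearMap.map_smul, hzero, smul_zero, add_zero]
end
end

section
/- Let 0 ≤ η₁, η₂ ≤ 1 and suppose there exists a joint map for the pair of noisy identity qubit channels (Λ_{η₁}, Λ_{η₂}), i.e., a linear map Λ : M₂⊗M₂ → M₂ with Λ(A⊗B) positive semidefinite for all positive semidefinite 2×2 matrices A, B, Λ(X⊗I) = Λ_{η₁}(X), and Λ(I⊗Y) = Λ_{η₂}(Y) for all 2×2 matrices X, Y. Then η₁² + η₂² ≤ 1. -/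
open Matrix Kronecker
open scoped ComplexOrder

noncomputable section

/-!
Let `X, Z` be the Pauli matrices `σx, σz` and `P^X_s = (1 + sX)/2`, `P^Z_t = (1 + tZ)/2`
(`s, t = ±1`) their spectral projections. A joint map `Λ` yields four positive semidefinite
matrices `M_st = Λ(P^X_s ⊗ P^Z_t)` with `∑ M_st = 1`, `∑ s M_st = η₁ X` and `∑ t M_st = η₂ Z`.
As `X` and `Z` are anticommuting involutions, `O_st = s η₁ X + t η₂ Z` satisfies `O_st² = c`
with `c = η₁² + η₂²`, and `∑ M_st O_st = η₁ (∑ s M_st) X + η₂ (∑ t M_st) Z = c`. Hence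
`0 ≤ ∑ tr (M_st (1 - O_st)²) = tr (∑ M_st - 2 ∑ M_st O_st + c ∑ M_st) = (1 - c) tr 1`.
-/

def Bool.toSign (b : Bool) : ℝ := if b then 1 else -1

@[simp] lemma Bool.toSign_true : true.toSign = 1 := rfl

@[simp] lemma Bool.toSign_false : false.toSign = -1 := rfl

namespace Matrix

section Kronecker

variable {ι l m n p α : Type*} [NonUnitalNonAssocSemiring α]

lemma sum_kronecker (s : Finset ι) (A : ι → Matrix l m α) (B : Matrix n p α) :
    (∑ i ∈ s, A i) ⊗ₖ B = ∑ i ∈ s, A i ⊗ₖ B := by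
  ext ⟨i₁, i₂⟩ ⟨j₁, j₂⟩
  simp [sum_apply, Finset.sum_mul]

lemma kronecker_sum (s : Finset ι) (A : Matrix l m α) (B : ι → Matrix n p α) :
    A ⊗ₖ (∑ i ∈ s, B i) = ∑ i ∈ s, A ⊗ₖ B i := by
  ext ⟨i₁, i₂⟩ ⟨j₁, j₂⟩
  simp [sum_apply, Finset.mul_sum]

end Kronecker

variable {n 𝕜 : Type*} [RCLike 𝕜]

section SpectralProj

variable [DecidableEq n]

def spectralProj (U : Matrix n n 𝕜) (s : Bool) : Matrix n n 𝕜 := (2⁻¹ : 𝕜) • (1 + s.toSign • U)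

lemma sum_spectralProj (U : Matrix n n 𝕜) : ∑ s, spectralProj U s = 1 := by
  simp only [Fintype.sum_bool, spectralProj, Bool.toSign_true, Bool.toSign_false]
  module

lemma sum_toSign_smul_spectralProj (U : Matrix n n 𝕜) : ∑ s, s.toSign • spectralProj U s = U := by
  simp only [Fintype.sum_bool, spectralProj, Bool.toSign_true, Bool.toSign_false]
  module

lemma posSemidef_spectralProj [Fintype n] {U : Matrix n n 𝕜} (hU : U.IsHermitian)
    (hUU : U * U = 1) (s : Bool) : (spectralProj U s).PosSemidef := by
  have hP : (spectralProj U s)ᴴ = spectralProj U s := by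
    simp [spectralProj, conjTranspose_smul, hU.eq]
  have hPP : spectralProj U s * spectralProj U s = spectralProj U s := by
    have hs : s.toSign * s.toSign = 1 := by cases s <;> simp
    simp only [spectralProj, smul_mul_smul, add_mul, mul_add, one_mul, mul_one, hUU, hs, one_smul]
    module
  simpa [hP, hPP] using posSemidef_conjTranspose_mul_self (spectralProj U s)

end SpectralProj

variable [Fintype n]

lemma PosSemidef.trace_mul_conjTranspose_mul_self_nonneg {M : Matrix n n 𝕜} (hM : M.PosSemidef)
    (A : Matrix n n 𝕜) : 0 ≤ (M * (Aᴴ * A)).trace := by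
  rw [← Matrix.mul_assoc, trace_mul_cycle]
  exact (hM.mul_mul_conjTranspose_same A).trace_nonneg

variable [DecidableEq n]

lemma smul_add_smul_mul_self_of_anticomm {X Z : Matrix n n 𝕜} (hXX : X * X = 1) (hZZ : Z * Z = 1)
    (hXZ : X * Z + Z * X = 0) (a b : ℝ) :
    (a • X + b • Z) * (a • X + b • Z) = (a ^ 2 + b ^ 2) • (1 : Matrix n n 𝕜) := by
  simp only [add_mul, mul_add, smul_mul_smul, hXX, hZZ]
  linear_combination (norm := module) (a * b) • hXZ

theorem sq_add_sq_le_one_of_jointly_measurable [Nonempty n] {X Z : Matrix n n 𝕜}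
    (hX : X.IsHermitian) (hZ : Z.IsHermitian) (hXX : X * X = 1) (hZZ : Z * Z = 1)
    (hXZ : X * Z + Z * X = 0) {η₁ η₂ : ℝ} {M : Bool → Bool → Matrix n n 𝕜}
    (hM : ∀ s t, (M s t).PosSemidef) (hsum : ∑ s, ∑ t, M s t = 1)
    (h₁ : ∑ s, ∑ t, s.toSign • M s t = η₁ • X) (h₂ : ∑ s, ∑ t, t.toSign • M s t = η₂ • Z) :
    η₁ ^ 2 + η₂ ^ 2 ≤ 1 := by
  set c := η₁ ^ 2 + η₂ ^ 2
  set O : Bool → Bool → Matrix n n 𝕜 := fun s t => (s.toSign * η₁) • X + (t.toSign * η₂) • Z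
  have hO : ∀ s t, (O s t).IsHermitian := fun s t =>
    (hX.smul (IsSelfAdjoint.all _)).add (hZ.smul (IsSelfAdjoint.all _))
  have hOO : ∀ s t, O s t * O s t = c • 1 := fun s t => by
    rw [smul_add_smul_mul_self_of_anticomm hXX hZZ hXZ]
    cases s <;> cases t <;> simp [c]
  have hMO : ∑ s, ∑ t, M s t * O s t = c • 1 := by
    calc ∑ s, ∑ t, M s t * O s t
        = η₁ • (∑ s, ∑ t, s.toSign • M s t) * X + η₂ • (∑ s, ∑ t, t.toSign • M s t) * Z := by
          simp only [O, Fintype.sum_bool, mul_add, add_mul, mul_smul_comm, smul_mul_assoc, smul_add]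
          module
      _ = c • 1 := by
          rw [h₁, h₂]
          simp only [smul_mul_assoc, hXX, hZZ, smul_smul, ← add_smul, c, sq]
  have hsq : ∀ s t, (1 - O s t)ᴴ * (1 - O s t) = (1 + c) • 1 - (2 : ℝ) • O s t := fun s t => by
    rw [conjTranspose_sub, conjTranspose_one, (hO s t).eq]
    simp only [sub_mul, mul_sub, one_mul, mul_one, hOO]
    module
  have hkey : ∑ s, ∑ t, M s t * ((1 - O s t)ᴴ * (1 - O s t)) = (1 - c) • 1 := by
    simp only [hsq, mul_sub, mul_smul_comm, mul_one, Finset.sum_sub_distrib, ← Finset.smul_sum,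
      hsum, hMO]
    module
  have hnonneg : 0 ≤ (∑ s, ∑ t, M s t * ((1 - O s t)ᴴ * (1 - O s t))).trace := by
    simp only [trace_sum]
    exact Finset.sum_nonneg fun s _ => Finset.sum_nonneg fun t _ =>
      (hM s t).trace_mul_conjTranspose_mul_self_nonneg (1 - O s t)
  rw [hkey, trace_smul, trace_one] at hnonneg
  have hre : 0 ≤ (1 - c) * Fintype.card n := by
    simpa [RCLike.smul_re] using (RCLike.nonneg_iff.mp hnonneg).1
  linarith [nonneg_of_mul_nonneg_left hre (by positivity)]

end Matrix

def pauliX : M2 := !![0, 1; 1, 0]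

def pauliZ : M2 := !![1, 0; 0, -1]

lemma pauliX_isHermitian : pauliX.IsHermitian := by
  ext i j
  fin_cases i <;> fin_cases j <;> simp [pauliX]

lemma pauliZ_isHermitian : pauliZ.IsHermitian := by
  ext i j
  fin_cases i <;> fin_cases j <;> simp [pauliZ]

lemma pauliX_mul_self : pauliX * pauliX = 1 := by
  simp [pauliX, one_fin_two]

lemma pauliZ_mul_self : pauliZ * pauliZ = 1 := by
  simp [pauliZ, one_fin_two]

lemma pauliX_mul_pauliZ_add_pauliZ_mul_pauliX : pauliX * pauliZ + pauliZ * pauliX = 0 := by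
  ext i j
  fin_cases i <;> fin_cases j <;> simp [pauliX, pauliZ]

lemma trace_pauliX : pauliX.trace = 0 := by
  simp [pauliX, trace_fin_two]

lemma trace_pauliZ : pauliZ.trace = 0 := by
  simp [pauliZ, trace_fin_two]

lemma noisyId_one (η : ℝ) : noisyId η 1 = 1 := by
  simp only [noisyId, trace_one, Fintype.card_fin]
  module

lemma noisyId_of_trace_eq_zero (η : ℝ) {A : M2} (hA : A.trace = 0) : noisyId η A = η • A := by
  simp [noisyId, hA, Complex.coe_smul]

theorem le_of_min_tensor_compatible_general (η₁ η₂ : ℝ)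
    (hcompat : ∃ Λ : M4 →ₗ[ℂ] M2, IsJointMap η₁ η₂ Λ) :
    η₁ ^ 2 + η₂ ^ 2 ≤ 1 := by
  obtain ⟨Λ, hpos, hm₁, hm₂⟩ := hcompat
  set P := spectralProj pauliX
  set Q := spectralProj pauliZ
  refine sq_add_sq_le_one_of_jointly_measurable pauliX_isHermitian pauliZ_isHermitian
    pauliX_mul_self pauliZ_mul_self pauliX_mul_pauliZ_add_pauliZ_mul_pauliX
    (M := fun s t => Λ (P s ⊗ₖ Q t))
    (fun s t => hpos _ _ (posSemidef_spectralProj pauliX_isHermitian pauliX_mul_self s)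
      (posSemidef_spectralProj pauliZ_isHermitian pauliZ_mul_self t)) ?_ ?_ ?_
  · calc ∑ s, ∑ t, Λ (P s ⊗ₖ Q t) = Λ ((∑ s, P s) ⊗ₖ ∑ t, Q t) := by
          rw [sum_kronecker, map_sum]
          simp only [kronecker_sum, map_sum]
      _ = 1 := by rw [sum_spectralProj, sum_spectralProj, hm₁, noisyId_one]
  · calc ∑ s, ∑ t, s.toSign • Λ (P s ⊗ₖ Q t) = Λ ((∑ s, s.toSign • P s) ⊗ₖ ∑ t, Q t) := by
          rw [sum_kronecker, map_sum]
          simp only [kronecker_sum, map_sum, smul_kronecker, LinearMap.map_smul_of_tower]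
      _ = η₁ • pauliX := by
          rw [sum_toSign_smul_spectralProj, sum_spectralProj, hm₁,
            noisyId_of_trace_eq_zero _ trace_pauliX]
  · calc ∑ s, ∑ t, t.toSign • Λ (P s ⊗ₖ Q t) = Λ ((∑ s, P s) ⊗ₖ ∑ t, t.toSign • Q t) := by
          rw [sum_kronecker, map_sum]
          simp only [kronecker_sum, map_sum, kronecker_smul, LinearMap.map_smul_of_tower]
      _ = η₂ • pauliZ := by
          rw [sum_toSign_smul_spectralProj, sum_spectralProj, hm₂,
            noisyId_of_trace_eq_zero _ trace_pauliZ]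

/-- if a joint map for the pair of noisy identity qubit channels
`(Λ_{η₁}, Λ_{η₂})` exists, then `η₁² + η₂² ≤ 1`. -/
theorem le_of_min_tensor_compatible (η₁ η₂ : ℝ)
    (h₁ : 0 ≤ η₁) (h₁' : η₁ ≤ 1) (h₂ : 0 ≤ η₂) (h₂' : η₂ ≤ 1)
    (hcompat : ∃ Λ : M4 →ₗ[ℂ] M2, IsJointMap η₁ η₂ Λ) :
    η₁ ^ 2 + η₂ ^ 2 ≤ 1 :=
  le_of_min_tensor_compatible_general η₁ η₂ hcompat

end
end
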